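/- Let [α_1|β_1], [α_2|β_2] ∈ S-Block(n). If [α_1|β_1] covers [α_2|β_2] in S-Block(n), then either α_1 = α_2 and β_2 covers β_1 in Dis(n), or β_1 = β_2 and α_1 covers α_2 in Dis(n). -/

import Mathlib

/-- A partition: a non-increasing list of positive integers. -/
def IsPartition (π : List ℕ) : Prop :=
  π.Pairwise (· ≥ ·) ∧ ∀ x ∈ π, 0 < x

/-- A partition of `n` into distinct positive parts, listed in (strictly) decreasing order. -/
def DisPart (n : ℕ) (γ : List ℕ) : Prop :=
  γ.Pairwise (· > ·) ∧ (∀ x ∈ γ, 0 < x) ∧ γ.sum = n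

/-- A partition of `n` into exactly `k` distinct positive parts. -/
def DisPartK (n k : ℕ) (γ : List ℕ) : Prop :=
  DisPart n γ ∧ γ.length = k

/-- `β` majorizes `α`. -/
def Majorizes (β α : List ℕ) : Prop :=
  β.sum = α.sum ∧ ∀ k ≤ min α.length β.length, (α.take k).sum ≤ (β.take k).sum

/-- α(π): the parts `d_i − i + 1` for 1-based indices `i` with `d_i ≥ i`. -/
def alphaOf (π : List ℕ) : List ℕ :=
  (List.range π.length).filterMap
    (fun i => if i + 1 ≤ π.getD i 0 then some (π.getD i 0 - i) else none)

/-- Number of boxes of the Ferrers diagram strictly below the diagonal in (1-based) column `j`. -/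
def betaColCount (π : List ℕ) (j : ℕ) : ℕ :=
  ((List.range π.length).filter (fun i => decide (j ≤ i ∧ j ≤ π.getD i 0))).length

/-- β(π): the positive column counts below the main diagonal, in decreasing order. -/
def betaOf (π : List ℕ) : List ℕ :=
  ((List.range π.length).map (fun j => betaColCount π (j + 1))).filter (fun c => c != 0)

/-- The mark (modified Durfee number) `m(π) = max {i : d_i ≥ i − 1}` (1-based indices). -/
noncomputable def mark (π : List ℕ) : ℕ :=
  sSup {i : ℕ | 1 ≤ i ∧ i ≤ π.length ∧ i ≤ π.getD (i - 1) 0 + 1}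

def IsIndepSet {V : Type*} (G : SimpleGraph V) (s : Set V) : Prop :=
  s.Pairwise (fun v w => ¬ G.Adj v w)

/-- `(K, S)` is a KS-partition of `G`. -/
def IsKS {V : Type*} [Fintype V] (G : SimpleGraph V) (K S : Finset V) : Prop :=
  (∀ v, v ∈ K ∨ v ∈ S) ∧ Disjoint K S ∧ G.IsClique (K : Set V) ∧ IsIndepSet G (S : Set V)

def IsSplit {V : Type*} [Fintype V] (G : SimpleGraph V) : Prop :=
  ∃ K S, IsKS G K S

noncomputable def cliqueNum {V : Type*} [Fintype V] (G : SimpleGraph V) : ℕ :=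
  sSup {n | ∃ s : Finset V, G.IsNClique n s}

noncomputable def indepNum {V : Type*} [Fintype V] (G : SimpleGraph V) : ℕ :=
  sSup {n | ∃ s : Finset V, IsIndepSet G (s : Set V) ∧ s.card = n}

/-- A balanced split graph: some KS-partition is simultaneously K-max and S-max. -/
def IsBalancedSplit {V : Type*} [Fintype V] (G : SimpleGraph V) : Prop :=
  IsSplit G ∧ ∃ K S, IsKS G K S ∧ K.card = cliqueNum G ∧ S.card = indepNum G

/-- An unbalanced split graph. -/
def IsUnbalancedSplit {V : Type*} [Fintype V] (G : SimpleGraph V) : Prop :=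
  IsSplit G ∧ ¬ ∃ K S, IsKS G K S ∧ K.card = cliqueNum G ∧ S.card = indepNum G

/-- `π` is the degree sequence of `G` (degrees in non-increasing order). -/
def HasDegSeq {V : Type*} [Fintype V] (G : SimpleGraph V) [DecidableRel G.Adj]
    (π : List ℕ) : Prop :=
  π.Pairwise (· ≥ ·) ∧ (π : Multiset ℕ) = Finset.univ.val.map (fun v => G.degree v)

def NoIsolated {V : Type*} [Fintype V] (G : SimpleGraph V) [DecidableRel G.Adj] : Prop :=
  ∀ v, 0 < G.degree v

def IsThreshold {V : Type*} [Fintype V] (G : SimpleGraph V) : Prop :=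
  ∃ (t : ℝ) (a : V → ℝ), 0 < t ∧ (∀ v, 0 < a v) ∧
    ∀ s : Finset V, (IsIndepSet G (s : Set V) ↔ ∑ v ∈ s, a v ≤ t)

noncomputable def chromNum {V : Type*} [Fintype V] (G : SimpleGraph V) : ℕ :=
  sInf {n | G.Colorable n}

def IsNG {V : Type*} [Fintype V] (G : SimpleGraph V) : Prop :=
  chromNum G + chromNum Gᶜ = Fintype.card V + 1

def ngA {V : Type*} [Fintype V] (G : SimpleGraph V) [DecidableRel G.Adj] : Set V :=
  {v | G.degree v = chromNum G - 1}

def IsNG1 {V : Type*} [Fintype V] (G : SimpleGraph V) [DecidableRel G.Adj] : Prop :=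
  IsNG G ∧ G.IsClique (ngA G)

def IsNG2 {V : Type*} [Fintype V] (G : SimpleGraph V) [DecidableRel G.Adj] : Prop :=
  IsNG G ∧ IsIndepSet G (ngA G)

def IsNG3 {V : Type*} [Fintype V] (G : SimpleGraph V) [DecidableRel G.Adj] : Prop :=
  IsNG G ∧ Nonempty ((G.induce (ngA G)) ≃g SimpleGraph.cycleGraph 5)

/-- `[α|β]` is an S-block for the integer `n`. -/
def IsSBlock (n : ℕ) (α β : List ℕ) : Prop :=
  DisPart n α ∧ DisPart n β ∧ Majorizes β α ∧
    (α.length = β.length ∨ α.length = β.length + 1)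

/-- `[α₁|β₁] ⪰ [α₂|β₂]` in the block order. -/
def BlockMaj (α₁ β₁ α₂ β₂ : List ℕ) : Prop :=
  Majorizes α₁ α₂ ∧ Majorizes β₂ β₁

/-- τ'_k(n) = (n − C(k,2), k−1, k−2, …, 2, 1). -/
def tauMax (n k : ℕ) : List ℕ :=
  (n - Nat.choose k 2) :: ((List.range (k - 1)).reverse.map (· + 1))

/-- τ_k(n): parts (k−i+1)+q+1 for 1 ≤ i ≤ r and (k−i+1)+q for r < i ≤ k,
where n − C(k+1,2) = qk + r, 0 ≤ r < k. -/
def tauMin (n k : ℕ) : List ℕ :=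
  (List.range k).map
    (fun i => (k - i) + (n - Nat.choose (k + 1) 2) / k +
      (if i < (n - Nat.choose (k + 1) 2) % k then 1 else 0))

/-- `β` covers `α` in `Dis(n)`. -/
def CoversDis (n : ℕ) (β α : List ℕ) : Prop :=
  DisPart n α ∧ DisPart n β ∧ Majorizes β α ∧ β ≠ α ∧
    ¬ ∃ γ, DisPart n γ ∧ Majorizes β γ ∧ Majorizes γ α ∧ γ ≠ α ∧ γ ≠ β

/-- `[α₁|β₁]` covers `[α₂|β₂]` in `S-Block(n)`. -/
def BlockCovers (n : ℕ) (α₁ β₁ α₂ β₂ : List ℕ) : Prop :=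
  IsSBlock n α₁ β₁ ∧ IsSBlock n α₂ β₂ ∧ BlockMaj α₁ β₁ α₂ β₂ ∧ ¬(α₁ = α₂ ∧ β₁ = β₂) ∧
    ¬ ∃ α β, IsSBlock n α β ∧ BlockMaj α₁ β₁ α β ∧ BlockMaj α β α₂ β₂ ∧
      ¬(α = α₁ ∧ β = β₁) ∧ ¬(α = α₂ ∧ β = β₂)

/-- `[α|β]` is a threshold-covered block: member of TC(n). -/
def InTC (n : ℕ) (α β : List ℕ) : Prop :=
  IsSBlock n α β ∧ CoversDis n β α

def IsLubDis (n : ℕ) (a b c : List ℕ) : Prop :=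
  Majorizes c a ∧ Majorizes c b ∧
    ∀ d, DisPart n d → Majorizes d a → Majorizes d b → Majorizes d c

def IsGlbDis (n : ℕ) (a b c : List ℕ) : Prop :=
  Majorizes a c ∧ Majorizes b c ∧
    ∀ d, DisPart n d → Majorizes a d → Majorizes b d → Majorizes c d

/-! The product interval between two S-blocks consists of S-blocks: the length condition on
`[α|β]` is squeezed between `len β ≤ len α` (majorization of partitions into positive parts never
lengthens) and `len α ≤ len α₂ ≤ len β₂ + 1 ≤ len β + 1`. Hence a cover `[α₁|β₁] ⋗ [α₂|β₂]` has
the corner `[α₂|β₁]` as one of its endpoints, so one coordinate is fixed, and any partition strictly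
between the other coordinates would give a block strictly between the two. -/

theorem DisPart.pos {n : ℕ} {γ : List ℕ} (h : DisPart n γ) : ∀ x ∈ γ, 0 < x := h.2.1

theorem Majorizes.refl (α : List ℕ) : Majorizes α α := ⟨rfl, fun _ _ => le_rfl⟩

theorem Majorizes.length_le {β α : List ℕ} (hβ : ∀ x ∈ β, 0 < x) (h : Majorizes β α) :
    β.length ≤ α.length := by
  by_contra! hlt
  have hprefix : β.sum ≤ (β.take α.length).sum := by
    simpa [h.1] using h.2 α.length (by omega)
  have hdrop : 0 < (β.drop α.length).sum :=
    List.sum_pos _ (fun x hx => hβ x (List.mem_of_mem_drop hx)) (by simpa using hlt)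
  have := List.sum_take_add_sum_drop β α.length
  omega

theorem Majorizes.trans {γ β α : List ℕ} (hγ : ∀ x ∈ γ, 0 < x) (hβ : ∀ x ∈ β, 0 < x)
    (hγβ : Majorizes γ β) (hβα : Majorizes β α) : Majorizes γ α := by
  have hlγ := hγβ.length_le hγ
  have hlβ := hβα.length_le hβ
  refine ⟨hγβ.1.trans hβα.1, fun k hk => ?_⟩
  exact (hβα.2 k (by omega)).trans (hγβ.2 k (by omega))

theorem IsSBlock.of_between {n : ℕ} {α₁ β₁ α₂ β₂ α β : List ℕ} (h₁ : IsSBlock n α₁ β₁)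
    (h₂ : IsSBlock n α₂ β₂) (hα : DisPart n α) (hβ : DisPart n β)
    (h₁α : BlockMaj α₁ β₁ α β) (hα₂ : BlockMaj α β α₂ β₂) : IsSBlock n α β := by
  obtain ⟨hα₁, hβ₁, hβ₁α₁, -⟩ := h₁
  obtain ⟨-, hβ₂, -, hlen₂⟩ := h₂
  have hβα : Majorizes β α :=
    h₁α.2.trans hβ.pos hβ₁.pos (hβ₁α₁.trans hβ₁.pos hα₁.pos h₁α.1)
  have := hβα.length_le hβ.pos
  have := hα₂.1.length_le hα.pos
  have := hα₂.2.length_le hβ₂.pos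
  exact ⟨hα, hβ, hβα, by omega⟩

namespace BlockCovers

variable {n : ℕ} {α₁ β₁ α₂ β₂ : List ℕ}

theorem eq_or_eq_of_between (h : BlockCovers n α₁ β₁ α₂ β₂) {α β : List ℕ}
    (hα : DisPart n α) (hβ : DisPart n β) (h₁ : BlockMaj α₁ β₁ α β) (h₂ : BlockMaj α β α₂ β₂) :
    (α = α₁ ∧ β = β₁) ∨ (α = α₂ ∧ β = β₂) := by
  by_contra hne
  exact h.2.2.2.2 ⟨α, β, h.1.of_between h.2.1 hα hβ h₁ h₂, h₁, h₂, hne ∘ .inl, hne ∘ .inr⟩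

theorem fst_eq_or_snd_eq (h : BlockCovers n α₁ β₁ α₂ β₂) : α₁ = α₂ ∨ β₁ = β₂ := by
  have ⟨⟨_, hβ₁, _⟩, ⟨hα₂, _⟩, ⟨hα₁α₂, hβ₂β₁⟩, _⟩ := h
  rcases h.eq_or_eq_of_between hα₂ hβ₁ ⟨hα₁α₂, .refl β₁⟩ ⟨.refl α₂, hβ₂β₁⟩ with hc | hc
  · exact .inl hc.1.symm
  · exact .inr hc.2

theorem coversDis_snd (h : BlockCovers n α₁ β₁ α₂ β₂) (hα : α₁ = α₂) : CoversDis n β₂ β₁ := by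
  subst hα
  refine ⟨h.1.2.1, h.2.1.2.1, h.2.2.1.2, fun hβ => h.2.2.2.1 ⟨rfl, hβ.symm⟩, ?_⟩
  rintro ⟨γ, hγ, hβ₂γ, hγβ₁, hγ₁, hγ₂⟩
  rcases h.eq_or_eq_of_between h.1.1 hγ ⟨.refl α₁, hγβ₁⟩ ⟨.refl α₁, hβ₂γ⟩ with hc | hc
  exacts [hγ₁ hc.2, hγ₂ hc.2]

theorem coversDis_fst (h : BlockCovers n α₁ β₁ α₂ β₂) (hβ : β₁ = β₂) : CoversDis n α₁ α₂ := by
  subst hβ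
  refine ⟨h.2.1.1, h.1.1, h.2.2.1.1, fun hα => h.2.2.2.1 ⟨hα, rfl⟩, ?_⟩
  rintro ⟨γ, hγ, hα₁γ, hγα₂, hγ₂, hγ₁⟩
  rcases h.eq_or_eq_of_between hγ h.1.2.1 ⟨hα₁γ, .refl β₁⟩ ⟨hγα₂, .refl β₁⟩ with hc | hc
  exacts [hγ₁ hc.1, hγ₂ hc.1]

end BlockCovers

/-- If [α₁|β₁] covers [α₂|β₂] in S-Block(n) then either α₁ = α₂ and β₂ covers
β₁ in Dis(n), or β₁ = β₂ and α₁ covers α₂ in Dis(n). -/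
theorem stmt13 (n : ℕ) (α₁ β₁ α₂ β₂ : List ℕ) (h : BlockCovers n α₁ β₁ α₂ β₂) :
    (α₁ = α₂ ∧ CoversDis n β₂ β₁) ∨ (β₁ = β₂ ∧ CoversDis n α₁ α₂) := by
  rcases h.fst_eq_or_snd_eq with hα | hβ
  · exact .inl ⟨hα, h.coversDis_snd hα⟩
  · exact .inr ⟨hβ, h.coversDis_fst hβ⟩
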